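/- arXiv:2512.06323 — 4 statements merged into one kernel-verified Lean document; each statement's English description precedes it below -/
import Mathlib

section
/- Suppose j : M → N is an elementary embedding of models of ZF and l : P → N is an elementary embedding with l ↾ X = id for some X ⊆ P with X ⊆ N. Define i : M → P on Skolem terms by i(τ^M[a, s]) = τ^P[a', i(s)] where j(a) = l(a') and i(s) is determined by l(i(s)) = j(s) for indiscernibles s. Then for any formula φ and appropriate parameters, M ⊨ φ[a, s] iff P ⊨ φ[a', i(s)], so i is elementary. -/
open FirstOrder

/-- the abstract two-embedding transfer principle. Given elementary
embeddings `j : M → N` and `l : P → N`, parameters `a, a'` with `j a = l a'` and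
(indiscernible) tuples `s`, `t` with `l (t i) = j (s i)`, every formula transfers:
`M ⊨ φ[a, s] ↔ P ⊨ φ[a', t]`. Hence the map `i` defined by
`i(τ^M[a,s]) = τ^P[a', t]` is elementary. -/
theorem stmt6 (L : FirstOrder.Language) (M N P : Type)
    [L.Structure M] [L.Structure N] [L.Structure P]
    (j : M ↪ₑ[L] N) (l : P ↪ₑ[L] N)
    (k : ℕ) (a : M) (a' : P) (s : Fin k → M) (t : Fin k → P)
    (ha : j a = l a') (hst : ∀ i : Fin k, l (t i) = j (s i))
    (φ : L.Formula (Fin (k + 1))) :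
    φ.Realize (Fin.cons a s) ↔ φ.Realize (Fin.cons a' t) := by
  rw [← j.map_formula, ← l.map_formula]
  have : j ∘ Fin.cons a s = l ∘ Fin.cons a' t := by
    funext i
    refine Fin.cases ?_ ?_ i <;> simp [ha, hst]
  rw [this]
end

section
/- A countably complete tower of measures yields a wellfounded direct limit: if ⟨μ_n : n < ω⟩ is a tower of countably complete ultrafilters on Z (μ_n on Z^n, each projecting to the previous ones) such that for every sequence ⟨A_n : n < ω⟩ with A_n ∈ μ_n there is f ∈ Z^ω with f↾n ∈ A_n for all n, then the direct limit of the ultrapowers Ult(V, μ_n) along the canonical maps π_{μ_m,μ_n} is wellfounded. -/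
/-- Restriction of an `n`-tuple to its first `m` coordinates. -/
def restrictTuple {Z : Type} {m n : ℕ} (h : m ≤ n) (u : Fin n → Z) : Fin m → Z :=
  fun i => u (Fin.castLE h i)

/-- `μ` (on `Z^n`) projects to `ν` (on `Z^m`). -/
def Projects {Z : Type} {m n : ℕ} (h : m ≤ n) (μ : Ultrafilter (Fin n → Z))
    (ν : Ultrafilter (Fin m → Z)) : Prop :=
  ∀ A : Set (Fin m → Z), A ∈ ν ↔ {u | restrictTuple h u ∈ A} ∈ μ

/-- Countable completeness (σ-completeness) of an ultrafilter. -/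
def CountablyComplete {α : Type*} (μ : Ultrafilter α) : Prop :=
  ∀ s : ℕ → Set α, (∀ n, s n ∈ μ) → (⋂ n, s n) ∈ μ

/-- The membership relation of the direct limit of the ultrapowers `Ult(V, μ_n)` along the
canonical maps, on representatives `(n, f)` with `f : Z^n → V`. -/
def dlMem {Z : Type} {V : Type*} (E : V → V → Prop) (μ : ∀ n : ℕ, Ultrafilter (Fin n → Z))
    (a b : Σ n : ℕ, (Fin n → Z) → V) : Prop :=
  {u : Fin (max a.1 b.1) → Z |
      E (a.2 (restrictTuple (le_max_left a.1 b.1) u))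
        (b.2 (restrictTuple (le_max_right a.1 b.1) u))} ∈ μ (max a.1 b.1)

/-!
A descending chain `[a_{k+1}] ∈ [a_k]` in the direct limit is witnessed by measure-one sets
`B_k` on which `a_{k+1}(u) E a_k(u)`. Lifting every `B_k` to each level `n` above its own and
intersecting (countable completeness) gives measure-one sets `A_n`; a thread `f` through them
lies in every `B_k` at once, so `k ↦ a_k(f↾n_k)` is an `E`-descending sequence in `V`.
-/

theorem exists_thread_of_mem {Z : Type} {μ : ∀ n : ℕ, Ultrafilter (Fin n → Z)}
    (hcc : ∀ n, CountablyComplete (μ n))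
    (hproj : ∀ (m n : ℕ) (h : m ≤ n), Projects h (μ n) (μ m))
    (hfib : ∀ A : (∀ n : ℕ, Set (Fin n → Z)), (∀ n, A n ∈ μ n) →
      ∃ f : ℕ → Z, ∀ n : ℕ, (fun i : Fin n => f i) ∈ A n)
    {N : ℕ → ℕ} (B : ∀ k, Set (Fin (N k) → Z)) (hB : ∀ k, B k ∈ μ (N k)) :
    ∃ f : ℕ → Z, ∀ k, (fun i : Fin (N k) => f i) ∈ B k := by
  let A : ∀ n, Set (Fin n → Z) := fun n => ⋂ k, ⋂ h : N k ≤ n, {u | restrictTuple h u ∈ B k}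
  have hA : ∀ n, A n ∈ μ n := fun n =>
    hcc n _ fun k => Filter.iInter_mem.mpr fun h => (hproj (N k) n h (B k)).mp (hB k)
  obtain ⟨f, hf⟩ := hfib A hA
  exact ⟨f, fun k => Set.mem_iInter₂.mp (hf (N k)) k le_rfl⟩

/-- a countably complete tower of measures yields a wellfounded direct limit:
if `⟨μ_n⟩` is a tower of countably complete ultrafilters on `Z` and every sequence of
measure-one sets `⟨A_n⟩` admits a thread `f ∈ Z^ω` with `f↾n ∈ A_n` for all `n`, then the
direct limit of the ultrapowers of `(V, E)` along the canonical maps is wellfounded. -/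
theorem stmt11 {Z V : Type} (E : V → V → Prop) (hE : WellFounded E)
    (μ : ∀ n : ℕ, Ultrafilter (Fin n → Z))
    (hcc : ∀ n, CountablyComplete (μ n))
    (hproj : ∀ (m n : ℕ) (h : m ≤ n), Projects h (μ n) (μ m))
    (hfib : ∀ A : (∀ n : ℕ, Set (Fin n → Z)), (∀ n, A n ∈ μ n) →
      ∃ f : ℕ → Z, ∀ n : ℕ, (fun i : Fin n => f i) ∈ A n) :
    WellFounded (dlMem E μ) := by
  refine wellFounded_iff_isEmpty_descending_chain.mpr ⟨fun ⟨a, ha⟩ => ?_⟩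
  obtain ⟨f, hf⟩ := exists_thread_of_mem hcc hproj hfib _ ha
  exact (wellFounded_iff_isEmpty_descending_chain.mp hE).false
    ⟨fun k => (a k).2 (fun i => f i), hf⟩
end

section
/- Conversely, if the direct limit of ultrapowers along a tower of measures ⟨μ_n : n < ω⟩ on Z is wellfounded, then for every sequence ⟨A_n : n<ω⟩ with A_n ∈ μ_n there exists f ∈ Z^ω such that f↾n ∈ A_n for all n. -/
/-- Composing restrictions. -/
theorem restrictTuple_comp {Z : Type} {k m n : ℕ} (h1 : k ≤ m) (h2 : m ≤ n) (u : Fin n → Z) :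
    restrictTuple h1 (restrictTuple h2 u) = restrictTuple (h1.trans h2) u := rfl

theorem restrictTuple_self {Z : Type} {n : ℕ} (u : Fin n → Z) :
    restrictTuple le_rfl u = u := rfl

/-- A well-founded relation admits no infinite descending sequence. -/
theorem noDescSeq {α : Type*} {r : α → α → Prop} (hwf : WellFounded r) (f : ℕ → α)
    (hf : ∀ n, r (f (n + 1)) (f n)) : False := by
  obtain ⟨a, ⟨n, rfl⟩, ha⟩ := hwf.has_min (Set.range f) ⟨f 0, 0, rfl⟩
  exact ha (f (n + 1)) ⟨_, rfl⟩ (hf n)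

/-- conversely, if the direct limit of the ultrapowers (of the ordinals) along
a tower of measures is wellfounded, then the tower is countably complete: every sequence of
measure-one sets `⟨A_n⟩` admits a thread `f ∈ Z^ω` with `f↾n ∈ A_n` for all `n`. -/
theorem stmt12 {Z : Type} (μ : ∀ n : ℕ, Ultrafilter (Fin n → Z))
    (hcc : ∀ n, CountablyComplete (μ n))
    (hproj : ∀ (m n : ℕ) (h : m ≤ n), Projects h (μ n) (μ m))
    (hwf : WellFounded (dlMem (fun a b : Ordinal => a < b) μ)) :
    ∀ A : (∀ n : ℕ, Set (Fin n → Z)), (∀ n, A n ∈ μ n) →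
      ∃ f : ℕ → Z, ∀ n : ℕ, (fun i : Fin n => f i) ∈ A n := by
  classical
  intro A hA
  by_contra hno
  push_neg at hno
  -- The coherent tower of measure-one sets
  set A' : ∀ n : ℕ, Set (Fin n → Z) :=
    fun n => {u | ∀ m, ∀ h : m ≤ n, restrictTuple h u ∈ A m} with hA'def
  have hA'mem : ∀ n, A' n ∈ μ n := by
    intro n
    have key : (⋂ m : ℕ, {u : Fin n → Z | ∀ h : m ≤ n, restrictTuple h u ∈ A m}) ∈ μ n := by
      apply hcc n
      intro m
      by_cases h : m ≤ n
      · have : {u : Fin n → Z | ∀ h : m ≤ n, restrictTuple h u ∈ A m}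
            = {u : Fin n → Z | restrictTuple h u ∈ A m} := by
          ext u; constructor
          · exact fun H => H h
          · exact fun H h' => H
        rw [this]
        exact (hproj m n h (A m)).mp (hA m)
      · have : {u : Fin n → Z | ∀ h : m ≤ n, restrictTuple h u ∈ A m} = Set.univ := by
          ext u; simp [h]
        rw [this]; exact Filter.univ_mem
    have : A' n = ⋂ m : ℕ, {u : Fin n → Z | ∀ h : m ≤ n, restrictTuple h u ∈ A m} := by
      ext u; simp [hA'def, Set.mem_iInter]
    rwa [this]
  have hA'closed : ∀ {m n : ℕ} (h : m ≤ n) (u : Fin n → Z),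
      u ∈ A' n → restrictTuple h u ∈ A' m := by
    intro m n h u hu k hk
    exact hu k (hk.trans h)
  -- The tree relation: proper extensions lying in the tower
  set R : (Σ n : ℕ, Fin n → Z) → (Σ n : ℕ, Fin n → Z) → Prop :=
    fun b a => ∃ h : a.1 < b.1, b.2 ∈ A' b.1 ∧ restrictTuple h.le b.2 = a.2 with hRdef
  haveI : IsIrrefl (Σ n : ℕ, Fin n → Z) R := by
    constructor; rintro a ⟨h, -, -⟩; exact lt_irrefl _ h
  haveI : IsTrans (Σ n : ℕ, Fin n → Z) R := by
    constructor
    rintro a b c ⟨hab, ha2, hrab⟩ ⟨hbc, hb2, hrbc⟩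
    refine ⟨hbc.trans hab, ha2, ?_⟩
    have h2 : restrictTuple hbc.le (restrictTuple hab.le a.2) = restrictTuple hbc.le b.2 := by
      rw [hrab]
    rw [restrictTuple_comp] at h2
    exact h2.trans hrbc
  haveI : IsStrictOrder (Σ n : ℕ, Fin n → Z) R := ⟨⟩
  -- R is well-founded: a descending sequence would yield a thread
  have hRwf : WellFounded R := by
    rw [RelEmbedding.wellFounded_iff_isEmpty]
    constructor
    intro g
    have hstep : ∀ k : ℕ, R (g (k + 1)) (g k) := fun k => g.map_rel_iff.mpr (Nat.lt_succ_self k)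
    -- lengths
    have hlen : ∀ k : ℕ, (g k).1 < (g (k + 1)).1 := fun k => (hstep k).1
    have hlen' : ∀ k : ℕ, k ≤ (g k).1 := by
      intro k
      induction k with
      | zero => exact Nat.zero_le _
      | succ k ih => exact Nat.succ_le_of_lt (lt_of_le_of_lt ih (hlen k))
    have hmono : ∀ k l : ℕ, k ≤ l → (g k).1 ≤ (g l).1 := by
      intro k l hkl
      induction hkl with
      | refl => exact le_rfl
      | step _ ih => exact ih.trans (hlen _).le
    -- coherence
    have hcoh : ∀ k l : ℕ, k ≤ l → ∀ h : (g k).1 ≤ (g l).1,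
        restrictTuple h (g l).2 = (g k).2 := by
      intro k l hkl
      induction hkl with
      | refl => intro h; exact restrictTuple_self _
      | @step m hm ih =>
        intro h
        have h' : (g k).1 ≤ (g m).1 := hmono k m hm
        have h1 : restrictTuple h (g (m + 1)).2
            = restrictTuple h' (restrictTuple (hlen m).le (g (m + 1)).2) := rfl
        rw [h1, (hstep m).2.2, ih h']
    -- the thread
    have hjl : ∀ j : ℕ, j < (g (j + 1)).1 := fun j => lt_of_lt_of_le (Nat.lt_succ_self j)
      (hlen' (j + 1))
    set f : ℕ → Z := fun j => (g (j + 1)).2 ⟨j, hjl j⟩ with hfdef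
    have hfval : ∀ (k : ℕ) (j : ℕ) (hj : j < (g k).1), k ≥ j + 1 → (g k).2 ⟨j, hj⟩ = f j := by
      intro k j hj hk
      exact congrFun (hcoh (j + 1) k hk (hmono _ _ hk)) ⟨j, hjl j⟩
    have hthread : ∀ n : ℕ, (fun i : Fin n => f i) ∈ A n := by
      intro n
      have hmem : (g (n + 1)).2 ∈ A' (g (n + 1)).1 := (hstep n).2.1
      have hn : n ≤ (g (n + 1)).1 := le_of_lt (hjl n)
      have hres : restrictTuple hn (g (n + 1)).2 ∈ A' n := hA'closed hn _ hmem
      have heq : (fun i : Fin n => f i) = restrictTuple hn (g (n + 1)).2 := by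
        funext i
        exact (hfval (n + 1) i (lt_of_lt_of_le i.2 hn) (by omega)).symm
      rw [heq]
      have := hres n le_rfl
      rwa [restrictTuple_self] at this
    obtain ⟨n, hn⟩ := hno f
    exact hn (hthread n)
  -- rank functions give a descending dlMem sequence
  haveI : IsWellFounded (Σ n : ℕ, Fin n → Z) R := ⟨hRwf⟩
  refine noDescSeq hwf
    (fun k => ⟨k, fun u => Ordinal.lift (IsWellFounded.rank R ⟨k, u⟩)⟩) ?_
  intro k
  have hBsub : A' (k + 1) ⊆ {v : Fin (k + 1) → Z |
      Ordinal.lift (IsWellFounded.rank R ⟨k + 1, v⟩) <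
        Ordinal.lift (IsWellFounded.rank R ⟨k, restrictTuple (Nat.le_succ k) v⟩)} := by
    intro v hv
    have hrel : R ⟨k + 1, v⟩ ⟨k, restrictTuple (Nat.le_succ k) v⟩ :=
      ⟨Nat.lt_succ_self k, hv, rfl⟩
    exact Ordinal.lift_lt.mpr (IsWellFounded.rank_lt_of_rel hrel)
  have hB : {v : Fin (k + 1) → Z |
      Ordinal.lift (IsWellFounded.rank R ⟨k + 1, v⟩) <
        Ordinal.lift (IsWellFounded.rank R ⟨k, restrictTuple (Nat.le_succ k) v⟩)} ∈ μ (k + 1) :=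
    Filter.mem_of_superset (hA'mem (k + 1)) hBsub
  exact (hproj (k + 1) (max (k + 1) k) (le_max_left _ _) _).mp hB
end

section
/- The set of reals defined by a homogeneity system is invariant under passing to a smaller forcing extension in the following sense: if μ̄ is a homogeneity system of κ-complete measures and g is generic for a forcing of size < κ, then each μ_s generates a κ-complete ultrafilter μ_s^g in V[g] (namely the filter generated by μ_s), and the family ⟨μ_s^g⟩ is again a homogeneity system in V[g] with the same projection relations. -/
/-- small forcing preserves homogeneity systems. Let `G` be the family of
ground-model sets, and `U s` (for `s ∈ ω^{<ω}`) a ground-model homogeneity system of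
κ-complete measures on `Z^{<ω}` (coded on `List Z`). If the forcing has size `< κ`, so
that every set in the extension is covered by fewer than κ many ground-model sets each
deciding it, then each `μ_s` generates a κ-complete ultrafilter `ν s` in the extension,
and `⟨ν s⟩` is again a homogeneity system with the same dimensions and projection
relations. -/
theorem stmt13 {Z : Type} (κ : Cardinal) (hκ : Cardinal.aleph0 < κ)
    (G : Set (Set (List Z)))
    (U : List ℕ → Set (Set (List Z)))
    (hUG : ∀ s, U s ⊆ G)
    (hultra : ∀ s, ∀ A ∈ G, A ∈ U s ∨ Aᶜ ∈ U s)
    (hne : ∀ s, ∅ ∉ U s)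
    (hcomplete : ∀ (s : List ℕ) (ι : Type) (B : ι → Set (List Z)), Cardinal.mk ι < κ →
      (∀ i, B i ∈ U s) → ∀ A ∈ G, (⋂ i, B i) ⊆ A → A ∈ U s)
    (hdim : ∀ s : List ℕ, {l : List Z | l.length = s.length} ∈ U s)
    (hproj : ∀ s t : List ℕ, s <+: t → ∀ A ∈ G,
      (A ∈ U s ↔ {l : List Z | l.take s.length ∈ A} ∈ U t))
    (hGproj : ∀ (m : ℕ), ∀ A ∈ G, {l : List Z | l.take m ∈ A} ∈ G)
    (hcov : ∀ A : Set (List Z), ∃ (ι : Type) (B : ι → Set (List Z)),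
      Cardinal.mk ι < κ ∧ (∀ i, B i ∈ G) ∧ (⋃ i, B i) = Set.univ ∧
        ∀ i, B i ⊆ A ∨ B i ⊆ Aᶜ) :
    ∃ ν : List ℕ → Ultrafilter (List Z),
      (∀ s, ∀ A ∈ U s, A ∈ ν s) ∧
      (∀ s, ∀ A ∈ ν s, ∃ B ∈ U s, B ⊆ A) ∧
      (∀ (s : List ℕ) (ι : Type) (B : ι → Set (List Z)), Cardinal.mk ι < κ →
        (∀ i, B i ∈ ν s) → (⋂ i, B i) ∈ ν s) ∧
      (∀ s : List ℕ, {l : List Z | l.length = s.length} ∈ ν s) ∧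
      (∀ s t : List ℕ, s <+: t → ∀ A : Set (List Z),
        (A ∈ ν s ↔ {l : List Z | l.take s.length ∈ A} ∈ ν t)) := by
  classical
  -- Key lemma: any `< κ`-sized family of `U s`-sets contains a `U s`-set in its intersection.
  have key : ∀ (s : List ℕ) (ι : Type) (B : ι → Set (List Z)), Cardinal.mk ι < κ →
      (∀ i, B i ∈ U s) → ∃ C ∈ U s, C ⊆ ⋂ i, B i := by
    intro s ι B hι hB
    obtain ⟨J, C, hJ, hCG, hcover, hdec⟩ := hcov (⋂ i, B i)
    by_cases hex : ∃ j, C j ∈ U s ∧ C j ⊆ ⋂ i, B i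
    · obtain ⟨j, h1, h2⟩ := hex
      exact ⟨C j, h1, h2⟩
    · exfalso
      push_neg at hex
      set D : J → Set (List Z) := fun j => if (C j)ᶜ ∈ U s then (C j)ᶜ else C j with hDdef
      have hDU : ∀ j, D j ∈ U s := by
        intro j
        by_cases h : (C j)ᶜ ∈ U s
        · simpa [hDdef, h] using h
        · have h' : C j ∈ U s := (hultra s (C j) (hCG j)).resolve_right h
          simpa [hDdef, h] using h'
      set F : ι ⊕ J → Set (List Z) := Sum.elim B D with hFdef
      have hFU : ∀ k, F k ∈ U s := by rintro (i | j); exacts [hB i, hDU j]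
      have hFcard : Cardinal.mk (ι ⊕ J) < κ := by
        rw [Cardinal.mk_sum, Cardinal.lift_id, Cardinal.lift_id]
        exact Cardinal.add_lt_of_lt hκ.le hι hJ
      have hFempty : (⋂ k, F k) = ∅ := by
        ext x
        simp only [Set.mem_iInter, Set.mem_empty_iff_false, iff_false, not_forall]
        by_contra hx
        push_neg at hx
        have hxA : x ∈ ⋂ i, B i := Set.mem_iInter.2 fun i => hx (Sum.inl i)
        have hxU : x ∈ ⋃ j, C j := by rw [hcover]; trivial
        obtain ⟨j, hj⟩ := Set.mem_iUnion.1 hxU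
        have hxD : x ∈ D j := hx (Sum.inr j)
        by_cases h : (C j)ᶜ ∈ U s
        · have : x ∈ (C j)ᶜ := by simpa [hDdef, h] using hxD
          exact this hj
        · have hCjU : C j ∈ U s := (hultra s (C j) (hCG j)).resolve_right h
          have hCjA : C j ⊆ (⋂ i, B i)ᶜ := (hdec j).resolve_left (hex j hCjU)
          exact hCjA hj hxA
      set A1 : Set (List Z) := {l : List Z | l.length = (s ++ [0]).length} with hA1
      have hA1U : A1 ∈ U (s ++ [0]) := hdim (s ++ [0])
      have hA1G : A1 ∈ G := hUG _ hA1U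
      have hA1Us : A1 ∈ U s :=
        hcomplete s _ F hFcard hFU A1 hA1G (by rw [hFempty]; exact Set.empty_subset _)
      have hprojA1 := (hproj s s List.prefix_rfl A1 hA1G).mp hA1Us
      have hempty : {l : List Z | l.take s.length ∈ A1} = ∅ := by
        ext l
        simp only [Set.mem_setOf_eq, hA1, Set.mem_empty_iff_false, iff_false,
          List.length_append, List.length_take]
        intro h
        have h1 : min s.length l.length ≤ s.length := min_le_left _ _
        simp at h
        omega
      rw [hempty] at hprojA1
      exact hne s hprojA1
  -- membership predicate of the generated filter
  have hmem_inter : ∀ s (A1 A2 : Set (List Z)), (∃ B ∈ U s, B ⊆ A1) → (∃ B ∈ U s, B ⊆ A2) →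
      ∃ B ∈ U s, B ⊆ A1 ∩ A2 := by
    rintro s A1 A2 ⟨B1, hB1, h1⟩ ⟨B2, hB2, h2⟩
    have hbool : Cardinal.mk Bool < κ := (Cardinal.mk_lt_aleph0_iff.2 inferInstance).trans hκ
    obtain ⟨C, hCU, hC⟩ := key s Bool (fun b => if b then B1 else B2) hbool
      (by intro b; cases b <;> simp [hB1, hB2])
    refine ⟨C, hCU, fun x hx => ⟨h1 ?_, h2 ?_⟩⟩
    · have := Set.mem_iInter.1 (hC hx) true; simpa using this
    · have := Set.mem_iInter.1 (hC hx) false; simpa using this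
  have hν : ∀ s, ∃ ν : Ultrafilter (List Z), ∀ A, A ∈ ν ↔ ∃ B ∈ U s, B ⊆ A := by
    intro s
    let f : Filter (List Z) :=
      { sets := {A | ∃ B ∈ U s, B ⊆ A}
        univ_sets := ⟨_, hdim s, Set.subset_univ _⟩
        sets_of_superset := by
          rintro A A' ⟨C, hC, hCA⟩ hAA'
          exact ⟨C, hC, hCA.trans hAA'⟩
        inter_sets := by
          intro A A' hA hA'
          exact hmem_inter s A A' hA hA' }
    have hco : ∀ A : Set (List Z), Aᶜ ∉ f ↔ A ∈ f := by
      intro A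
      constructor
      · intro h
        obtain ⟨J, C, hJ, hCG, hcover, hdec⟩ := hcov A
        by_cases hex : ∃ j, C j ∈ U s ∧ C j ⊆ A
        · obtain ⟨j, h1, h2⟩ := hex
          exact ⟨C j, h1, h2⟩
        · exfalso
          push_neg at hex
          have hall : ∀ j, (C j)ᶜ ∈ U s := by
            intro j
            rcases hultra s (C j) (hCG j) with h' | h'
            · rcases hdec j with h'' | h''
              · exact absurd h'' (hex j h')
              · exact absurd ⟨C j, h', h''⟩ h
            · exact h'
          obtain ⟨D, hDU, hD⟩ := key s J (fun j => (C j)ᶜ) hJ hall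
          have hDe : D = ∅ := by
            apply Set.eq_empty_iff_forall_notMem.2
            intro x hx
            have hxU : x ∈ ⋃ j, C j := by rw [hcover]; trivial
            obtain ⟨j, hj⟩ := Set.mem_iUnion.1 hxU
            exact Set.mem_iInter.1 (hD hx) j hj
          exact hne s (hDe ▸ hDU)
      · intro hA hAc
        obtain ⟨B, hBU, hB⟩ := hmem_inter s A Aᶜ hA hAc
        rw [Set.inter_compl_self] at hB
        have : B = ∅ := Set.subset_empty_iff.1 hB
        exact hne s (this ▸ hBU)
    exact ⟨Ultrafilter.ofComplNotMemIff f hco, fun A => Iff.rfl⟩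
  choose ν hν using hν
  refine ⟨ν, ?_, ?_, ?_, ?_, ?_⟩
  · intro s A hA
    exact (hν s A).2 ⟨A, hA, subset_rfl⟩
  · intro s A hA
    exact (hν s A).1 hA
  · intro s ι B hι hB
    have hW : ∀ i, ∃ Bi ∈ U s, Bi ⊆ B i := fun i => (hν s (B i)).1 (hB i)
    choose W hWU hWsub using hW
    obtain ⟨C, hCU, hC⟩ := key s ι W hι hWU
    exact (hν s _).2 ⟨C, hCU, hC.trans (Set.iInter_mono hWsub)⟩
  · intro s
    exact (hν s _).2 ⟨_, hdim s, subset_rfl⟩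
  · intro s t hst A
    constructor
    · intro hA
      obtain ⟨B, hBU, hB⟩ := (hν s A).1 hA
      exact (hν t _).2 ⟨{l | l.take s.length ∈ B}, (hproj s t hst B (hUG s hBU)).1 hBU,
        fun l hl => hB hl⟩
    · intro hA
      by_contra hAc
      have hAcm : Aᶜ ∈ ν s := Ultrafilter.compl_mem_iff_notMem.2 hAc
      obtain ⟨B, hBU, hB⟩ := (hν s Aᶜ).1 hAcm
      have h1 : {l : List Z | l.take s.length ∈ B} ∈ ν t :=
        (hν t _).2 ⟨_, (hproj s t hst B (hUG s hBU)).1 hBU, subset_rfl⟩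
      have h3 := Filter.inter_mem h1 hA
      have hE : {l : List Z | l.take s.length ∈ B} ∩ {l : List Z | l.take s.length ∈ A} = ∅ := by
        ext l
        simp only [Set.mem_inter_iff, Set.mem_setOf_eq, Set.mem_empty_iff_false, iff_false,
          not_and]
        exact fun hb ha => hB hb ha
      rw [hE] at h3
      exact Filter.empty_notMem _ h3
end
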